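/- If real numbers x and y satisfy d(x,y) = 0 and Dτ(x,y) = 0, then x = 1/2, x = 1, or x = 3. -/
import Mathlib

def d (x y : ℝ) : ℝ := x^2*y + 3*x^2 - x*y - 3*y^2 - 3*x - 3*y
def Dtau (x y : ℝ) : ℝ := 2*x*y - 5*y - 3

theorem zeros_of_Dtau (x y : ℝ) (hd : d x y = 0) (hD : Dtau x y = 0) :
    x = 1/2 ∨ x = 1 ∨ x = 3 := by
  have hd' : x^2*y + 3*x^2 - x*y - 3*y^2 - 3*x - 3*y = 0 := hd
  have hD' : 2*x*y - 5*y - 3 = 0 := hD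
  have key : (2*x-1)*((x-1)^2*(x-3)) = 0 := by
    linear_combination ((2*x-5)^2/6) * hd' - (((x^2-x-3)*(2*x-5) - 3*(2*x*y-5*y-3) - 18)/6) * hD'
  rcases mul_eq_zero.1 key with h | h
  · left; linarith
  · rcases mul_eq_zero.1 h with h | h
    · right; left; have := pow_eq_zero_iff (n := 2) (by norm_num) |>.1 h; linarith
    · right; right; linarith
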